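/- arXiv:2404.19091 — 3 statements merged into one kernel-verified Lean document; each statement's English description precedes it below -/
import Mathlib

section
/- Let φ: (0,∞) → [0,∞) be a measurable function with φ(t+s) ≤ φ(t)φ(s) for all t,s > 0, φ integrable on (0,1], and suppose ψ: (0,∞) → [0,∞) is measurable with ψ(t+s) ≤ ψ(t)φ(s) for all t,s > 0 and ψ integrable on (0,1]. If ω > ω_0 := lim_{t→∞} t^{-1} log φ(t) and M_ω := ∫_0^∞ e^{-tω}(φ(t)+ψ(t)) dt < ∞, then ψ(t) ≤ e^{tω} t^{-2} M_ω² for all t > 0. -/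
open MeasureTheory

/-- if `φ` is submultiplicative and `ψ` is submultiplicative relative
to `φ` on `(0,∞)`, both integrable near `0`, `ω₀ = lim_{t→∞} log(φ t)/t`, `ω > ω₀`,
and `M_ω = ∫_0^∞ e^{-tω}(φ(t)+ψ(t)) dt < ∞`, then `ψ(t) ≤ e^{tω} t^{-2} M_ω²`. -/
theorem stmt_11 (φ ψ : ℝ → ℝ)
    (hφm : Measurable φ) (hψm : Measurable ψ)
    (hφ0 : ∀ t > (0:ℝ), 0 ≤ φ t) (hψ0 : ∀ t > (0:ℝ), 0 ≤ ψ t)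
    (hφsub : ∀ t > (0:ℝ), ∀ s > (0:ℝ), φ (t + s) ≤ φ t * φ s)
    (hψsub : ∀ t > (0:ℝ), ∀ s > (0:ℝ), ψ (t + s) ≤ ψ t * φ s)
    (hφint : IntegrableOn φ (Set.Ioc 0 1))
    (hψint : IntegrableOn ψ (Set.Ioc 0 1))
    (ω₀ ω : ℝ)
    (hω₀ : Filter.Tendsto (fun t => Real.log (φ t) / t) Filter.atTop (nhds ω₀))
    (hω : ω₀ < ω)
    (hM : IntegrableOn (fun t => Real.exp (-(t * ω)) * (φ t + ψ t)) (Set.Ioi 0)) :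
    ∀ t > (0:ℝ), ψ t ≤ Real.exp (t * ω) / t ^ 2 *
      (∫ s in Set.Ioi (0:ℝ), Real.exp (-(s * ω)) * (φ s + ψ s)) ^ 2 := by
  intro t ht
  set f : ℝ → ℝ := fun s => Real.exp (-(s * ω)) * (φ s + ψ s) with hfdef
  set I : ℝ := ∫ s in Set.Ioi (0:ℝ), f s with hIdef
  have hf_nonneg : ∀ s ∈ Set.Ioi (0:ℝ), 0 ≤ f s := fun s hs =>
    mul_nonneg (Real.exp_nonneg _) (add_nonneg (hφ0 s hs) (hψ0 s hs))
  have hI0 : 0 ≤ I := setIntegral_nonneg measurableSet_Ioi hf_nonneg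
  set gφ : ℝ → ℝ := fun s => Real.exp (-(s * ω)) * φ s with hgφdef
  set gψ : ℝ → ℝ := fun s => Real.exp (-(s * ω)) * ψ s with hgψdef
  have hem : Measurable fun s : ℝ => Real.exp (-(s * ω)) :=
    Real.measurable_exp.comp (measurable_id.mul_const ω).neg
  have hgφm : Measurable gφ := hem.mul hφm
  have hgψm : Measurable gψ := hem.mul hψm
  have hgφnn : ∀ s ∈ Set.Ioi (0:ℝ), 0 ≤ gφ s := fun s hs =>
    mul_nonneg (Real.exp_nonneg _) (hφ0 s hs)
  have hgψnn : ∀ s ∈ Set.Ioi (0:ℝ), 0 ≤ gψ s := fun s hs =>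
    mul_nonneg (Real.exp_nonneg _) (hψ0 s hs)
  -- integrability of the pieces on (0, ∞)
  have hgφint : IntegrableOn gφ (Set.Ioi (0:ℝ)) := by
    refine hM.mono' hgφm.aestronglyMeasurable ?_
    refine (ae_restrict_iff' measurableSet_Ioi).2 (ae_of_all _ fun s hs => ?_)
    rw [Real.norm_eq_abs, abs_of_nonneg (hgφnn s hs)]
    exact mul_le_mul_of_nonneg_left (le_add_of_nonneg_right (hψ0 s hs)) (Real.exp_nonneg _)
  have hgψint : IntegrableOn gψ (Set.Ioi (0:ℝ)) := by
    refine hM.mono' hgψm.aestronglyMeasurable ?_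
    refine (ae_restrict_iff' measurableSet_Ioi).2 (ae_of_all _ fun s hs => ?_)
    rw [Real.norm_eq_abs, abs_of_nonneg (hgψnn s hs)]
    exact mul_le_mul_of_nonneg_left (le_add_of_nonneg_left (hφ0 s hs)) (Real.exp_nonneg _)
  set Mφ : ℝ := ∫ s in Set.Ioi (0:ℝ), gφ s with hMφdef
  set Mψ : ℝ := ∫ s in Set.Ioi (0:ℝ), gψ s with hMψdef
  have hIsum : I = Mφ + Mψ := by
    rw [hIdef, hMφdef, hMψdef, ← integral_add hgφint hgψint]
    exact integral_congr_ae (ae_of_all _ fun s => by simp [hfdef, hgφdef, hgψdef, mul_add])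
  -- Chebyshev-type bound
  have cheb : ∀ g : ℝ → ℝ, Measurable g → IntegrableOn g (Set.Ioi (0:ℝ)) →
      (∀ s ∈ Set.Ioi (0:ℝ), 0 ≤ g s) → ∀ c : ℝ, 0 < c →
      (volume (Set.Ioo 0 t ∩ {s | c < g s})).toReal ≤ (∫ s in Set.Ioi (0:ℝ), g s) / c := by
    intro g hgm hgint hgnn c hc0
    have hint : Integrable g (volume.restrict (Set.Ioo 0 t)) :=
      hgint.mono_set Set.Ioo_subset_Ioi_self
    have hnn : 0 ≤ᵐ[volume.restrict (Set.Ioo 0 t)] g :=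
      (ae_restrict_iff' measurableSet_Ioo).2 (ae_of_all _ fun s hs => hgnn s hs.1)
    have h := mul_meas_ge_le_integral_of_nonneg hnn hint c
    rw [measureReal_def, Measure.restrict_apply (measurableSet_le measurable_const hgm)] at h
    have hsub : Set.Ioo 0 t ∩ {s | c < g s} ⊆ {x | c ≤ g x} ∩ Set.Ioo 0 t :=
      fun s hs => ⟨show c ≤ g s from le_of_lt hs.2, hs.1⟩
    have hfin1 : volume ({x | c ≤ g x} ∩ Set.Ioo 0 t) ≠ ⊤ :=
      ne_top_of_le_ne_top (by simp [Real.volume_Ioo]) (measure_mono Set.inter_subset_right)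
    have hmono : (volume (Set.Ioo 0 t ∩ {s | c < g s})).toReal ≤
        (volume ({x | c ≤ g x} ∩ Set.Ioo 0 t)).toReal :=
      ENNReal.toReal_mono hfin1 (measure_mono hsub)
    have hle : ∫ s in Set.Ioo 0 t, g s ≤ ∫ s in Set.Ioi (0:ℝ), g s :=
      setIntegral_mono_set hgint
        ((ae_restrict_iff' measurableSet_Ioi).2 (ae_of_all _ hgnn))
        (HasSubset.Subset.eventuallyLE Set.Ioo_subset_Ioi_self)
    rw [le_div_iff₀ hc0]
    nlinarith [le_trans h hle]
  -- key claim: for any c > I/t, ψ t * e^{-tω} ≤ c²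
  have key : ∀ c : ℝ, I / t < c → ψ t * Real.exp (-(t * ω)) ≤ c ^ 2 := by
    intro c hc
    have hc0 : 0 < c := lt_of_le_of_lt (div_nonneg hI0 ht.le) hc
    set A₁ : Set ℝ := Set.Ioo 0 t ∩ {s | c < gψ s} with hA₁def
    set A₂' : Set ℝ := Set.Ioo 0 t ∩ {s | c < gφ s} with hA₂'def
    set A₂ : Set ℝ := (fun s => t - s) ⁻¹' A₂' with hA₂def
    have hA₂'meas : MeasurableSet A₂' :=
      measurableSet_Ioo.inter (measurableSet_lt measurable_const hgφm)
    have h1 : (volume A₁).toReal ≤ Mψ / c := cheb gψ hgψm hgψint hgψnn c hc0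
    have h2 : (volume A₂').toReal ≤ Mφ / c := cheb gφ hgφm hgφint hgφnn c hc0
    have hA₂vol : volume A₂ = volume A₂' :=
      (Measure.measurePreserving_sub_left volume t).measure_preimage hA₂'meas.nullMeasurableSet
    have hA₁fin : volume A₁ ≠ ⊤ :=
      ne_top_of_le_ne_top (by simp [Real.volume_Ioo]) (measure_mono Set.inter_subset_left)
    have hA₂'fin : volume A₂' ≠ ⊤ :=
      ne_top_of_le_ne_top (by simp [Real.volume_Ioo]) (measure_mono Set.inter_subset_left)
    have hA₂fin : volume A₂ ≠ ⊤ := by rw [hA₂vol]; exact hA₂'fin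
    have hunion : volume (A₁ ∪ A₂) < volume (Set.Ioo 0 t) := by
      have hle : volume (A₁ ∪ A₂) ≤ volume A₁ + volume A₂ := measure_union_le _ _
      have hfin : volume (A₁ ∪ A₂) ≠ ⊤ :=
        ne_top_of_le_ne_top (ENNReal.add_ne_top.2 ⟨hA₁fin, hA₂fin⟩) hle
      rw [Real.volume_Ioo, ENNReal.lt_ofReal_iff_toReal_lt hfin, sub_zero]
      have hIc : I / c < t := by
        rw [div_lt_iff₀ hc0]
        rw [div_lt_iff₀ ht] at hc
        linarith [hc]
      calc (volume (A₁ ∪ A₂)).toReal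
          ≤ (volume A₁ + volume A₂).toReal :=
            ENNReal.toReal_mono (ENNReal.add_ne_top.2 ⟨hA₁fin, hA₂fin⟩) hle
        _ = (volume A₁).toReal + (volume A₂).toReal := ENNReal.toReal_add hA₁fin hA₂fin
        _ ≤ Mψ / c + Mφ / c := add_le_add h1 (by rw [hA₂vol]; exact h2)
        _ = I / c := by rw [hIsum, add_div]; ring
        _ < t := hIc
    have hnsub : ¬ Set.Ioo 0 t ⊆ A₁ ∪ A₂ :=
      fun h => absurd (measure_mono h) (not_le.2 hunion)
    obtain ⟨s, hs, hsn⟩ := Set.not_subset.1 hnsub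
    have hs1 : gψ s ≤ c := not_lt.1 fun h' => hsn (Or.inl ⟨hs, h'⟩)
    have hts : 0 < t - s := sub_pos.2 hs.2
    have hs2 : gφ (t - s) ≤ c := not_lt.1 fun h' =>
      hsn (Or.inr (show t - s ∈ A₂' from ⟨⟨hts, by linarith [hs.1]⟩, h'⟩))
    have hψs : ψ s ≤ c * Real.exp (s * ω) := by
      have e : (0:ℝ) < Real.exp (s * ω) := Real.exp_pos _
      calc ψ s = Real.exp (s * ω) * (Real.exp (-(s * ω)) * ψ s) := by
            rw [← mul_assoc, ← Real.exp_add]; simp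
        _ ≤ Real.exp (s * ω) * c := mul_le_mul_of_nonneg_left hs1 e.le
        _ = c * Real.exp (s * ω) := mul_comm _ _
    have hφts : φ (t - s) ≤ c * Real.exp ((t - s) * ω) := by
      have e : (0:ℝ) < Real.exp ((t - s) * ω) := Real.exp_pos _
      calc φ (t - s) = Real.exp ((t - s) * ω) * (Real.exp (-((t - s) * ω)) * φ (t - s)) := by
            rw [← mul_assoc, ← Real.exp_add]; simp
        _ ≤ Real.exp ((t - s) * ω) * c := mul_le_mul_of_nonneg_left hs2 e.le
        _ = c * Real.exp ((t - s) * ω) := mul_comm _ _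
    have hψt : ψ t ≤ ψ s * φ (t - s) := by
      have h := hψsub s hs.1 (t - s) hts
      have hst : s + (t - s) = t := by ring
      rwa [hst] at h
    have hmain : ψ t ≤ c ^ 2 * Real.exp (t * ω) := by
      calc ψ t ≤ ψ s * φ (t - s) := hψt
        _ ≤ (c * Real.exp (s * ω)) * (c * Real.exp ((t - s) * ω)) :=
            mul_le_mul hψs hφts (hφ0 _ hts) (mul_nonneg hc0.le (Real.exp_nonneg _))
        _ = c ^ 2 * Real.exp (t * ω) := by
            rw [mul_mul_mul_comm, ← Real.exp_add, show s * ω + (t - s) * ω = t * ω by ring]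
            ring
    calc ψ t * Real.exp (-(t * ω))
        ≤ (c ^ 2 * Real.exp (t * ω)) * Real.exp (-(t * ω)) :=
          mul_le_mul_of_nonneg_right hmain (Real.exp_nonneg _)
      _ = c ^ 2 := by rw [mul_assoc, ← Real.exp_add]; simp
  -- take the limit c → I/t from the right
  have hlim : Filter.Tendsto (fun c : ℝ => c ^ 2) (nhdsWithin (I / t) (Set.Ioi (I / t)))
      (nhds ((I / t) ^ 2)) :=
    ((continuous_pow 2).tendsto _).mono_left nhdsWithin_le_nhds
  have hfin : ψ t * Real.exp (-(t * ω)) ≤ (I / t) ^ 2 :=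
    ge_of_tendsto hlim (Filter.eventually_of_mem self_mem_nhdsWithin fun c hc => key c hc)
  have hexp : (0:ℝ) < Real.exp (t * ω) := Real.exp_pos _
  calc ψ t = (ψ t * Real.exp (-(t * ω))) * Real.exp (t * ω) := by
        rw [mul_assoc, ← Real.exp_add]; simp
    _ ≤ (I / t) ^ 2 * Real.exp (t * ω) := mul_le_mul_of_nonneg_right hfin hexp.le
    _ = Real.exp (t * ω) / t ^ 2 * I ^ 2 := by
        rw [div_pow]; ring
end

section
/- Under the hypotheses of the preceding statement, the Dyson–Phillips series Σ_{k=0}^∞ Per^k(u)(t) converges absolutely in X for every t > 0 and u ∈ X, uniformly for t in each interval (ε, 1/ε) with 0 < ε < 1. -/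
open MeasureTheory

noncomputable section

variable {X : Type*} [NormedAddCommGroup X] [NormedSpace ℝ X] [CompleteSpace X]

/-- The functions `t ↦ B Per^k(u)(t)`: `BPer 0 = (Be^{-tA})u` and
`BPer (k+1) t = ∫_0^t (Be^{-(t-s)A}) (BPer k s) ds`, where `S t = Be^{-tA}`. -/
def BPer (S : ℝ → X →L[ℝ] X) (u : X) : ℕ → ℝ → X
  | 0 => fun t => S t u
  | k + 1 => fun t => ∫ s in (0:ℝ)..t, S (t - s) (BPer S u k s)

/-- The Dyson–Phillips terms: `Per 0 u t = e^{-tA}u` and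
`Per (k+1) u t = ∫_0^t e^{-(t-s)A} (B Per^k(u)(s)) ds`. -/
def Per (T S : ℝ → X →L[ℝ] X) (u : X) : ℕ → ℝ → X
  | 0 => fun t => T t u
  | k + 1 => fun t => ∫ s in (0:ℝ)..t, T (t - s) (BPer S u k s)


lemma DP.rpow_one_div {x b : ℝ} (hx : 0 ≤ x) (hb : 0 < b) : (x ^ (1 / b)) ^ b = x := by
  rw [← Real.rpow_mul hx, one_div, inv_mul_cancel₀ hb.ne', Real.rpow_one]


lemma DP.integ_aux {α β lam t : ℝ} (hα : α < 1) (hβ : β < 1) (ht : 0 < t) :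
    IntervalIntegrable (fun s => (t - s) ^ (-α) * (Real.exp (lam * s) * s ^ (-β)))
      volume 0 t := by
  have e1 : (fun s : ℝ => (t - s) ^ (-α) * (Real.exp (lam * s) * s ^ (-β)))
      = fun s : ℝ => s ^ (-β) * ((t - s) ^ (-α) * Real.exp (lam * s)) := by
    funext s; ring
  have h1 : IntervalIntegrable (fun s : ℝ => (t - s) ^ (-α) * (Real.exp (lam * s) * s ^ (-β)))
      volume 0 (t / 2) := by
    rw [e1]
    apply (intervalIntegral.intervalIntegrable_rpow' (by linarith)).mul_continuousOn
    apply ContinuousOn.mul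
    · apply ContinuousOn.rpow_const (by fun_prop)
      intro x hx
      rw [Set.uIcc_of_le (by linarith)] at hx
      left
      have : x ≤ t / 2 := hx.2
      intro h
      have : t - x = 0 := h
      linarith
    · fun_prop
  have h2 : IntervalIntegrable (fun s : ℝ => (t - s) ^ (-α) * (Real.exp (lam * s) * s ^ (-β)))
      volume (t / 2) t := by
    have hF : IntervalIntegrable (fun s : ℝ => (t - s) ^ (-α)) volume (t / 2) t := by
      have := ((intervalIntegral.intervalIntegrable_rpow' (a := 0) (b := t / 2)
        (r := -α) (by linarith)).comp_sub_left t).symm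
      simpa [sub_half] using this
    apply hF.mul_continuousOn
    apply ContinuousOn.mul (by fun_prop)
    apply ContinuousOn.rpow_const (by fun_prop)
    intro x hx
    rw [Set.uIcc_of_le (by linarith)] at hx
    left
    have : t / 2 ≤ x := hx.1
    intro h; rw [h] at this; linarith
  exact h1.trans h2

lemma DP.eta_small {K α R : ℝ} (hK : 0 < K) (hα : α < 1) (hR : 0 < R) (ε : ℝ) (hε : 0 < ε) :
    ∃ lam : ℝ, 0 ≤ lam ∧ ∀ μ ≥ lam,
      (∫ r in (0:ℝ)..R, K * (r ^ (-α) * Real.exp (-(μ * r)))) ≤ ε := by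
  set b : ℝ := 1 - α with hb
  have hbpos : 0 < b := by simp [hb]; linarith
  set δ : ℝ := min R ((ε * b / (2 * K)) ^ (1 / b)) with hδ
  have hδpos : 0 < δ :=
    lt_min hR (Real.rpow_pos_of_pos (div_pos (mul_pos hε hbpos) (by linarith)) _)
  have hδR : δ ≤ R := min_le_left _ _
  have hδb : K * δ ^ b / b ≤ ε / 2 := by
    have h1 : δ ^ b ≤ ε * b / (2 * K) := by
      calc δ ^ b ≤ ((ε * b / (2 * K)) ^ (1 / b)) ^ b :=
            Real.rpow_le_rpow hδpos.le (min_le_right _ _) hbpos.le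
        _ = ε * b / (2 * K) := rpow_one_div (by positivity) hbpos
    rw [div_le_div_iff₀ hbpos (by norm_num)]
    calc K * δ ^ b * 2 ≤ K * (ε * b / (2 * K)) * 2 := by nlinarith [hK.le]
      _ = ε * b := by field_simp
  set Q : ℝ := 2 * K * R ^ b / (b * ε) with hQ
  have hRb : 0 < R ^ b := Real.rpow_pos_of_pos hR b
  have hQpos : 0 < Q := div_pos (mul_pos (by linarith : (0:ℝ) < 2 * K) hRb) (mul_pos hbpos hε)
  have hlam0 : 0 ≤ δ⁻¹ * Real.log (Q + 1) :=
    mul_nonneg (inv_nonneg.mpr hδpos.le) (Real.log_nonneg (by linarith))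
  refine ⟨δ⁻¹ * Real.log (Q + 1), hlam0, fun μ hμ => ?_⟩
  have hμ0 : 0 ≤ μ := le_trans hlam0 hμ
  have hint1 : ∀ a c : ℝ, IntervalIntegrable (fun r : ℝ => K * (r ^ (-α) * Real.exp (-(μ * r))))
      volume a c := by
    intro a c
    have : (fun r : ℝ => K * (r ^ (-α) * Real.exp (-(μ * r))))
        = fun r : ℝ => (r ^ (-α)) * (K * Real.exp (-(μ * r))) := by funext r; ring
    rw [this]
    exact (intervalIntegral.intervalIntegrable_rpow' (by linarith)).mul_continuousOn (by fun_prop)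
  have hint2 : ∀ a c C : ℝ, IntervalIntegrable (fun r : ℝ => C * r ^ (-α)) volume a c := by
    intro a c C
    have : (fun r : ℝ => C * r ^ (-α)) = fun r : ℝ => (r ^ (-α)) * C := by funext r; ring
    rw [this]
    exact (intervalIntegral.intervalIntegrable_rpow' (by linarith)).mul_continuousOn (by fun_prop)
  have hsplit : (∫ r in (0:ℝ)..R, K * (r ^ (-α) * Real.exp (-(μ * r))))
      = (∫ r in (0:ℝ)..δ, K * (r ^ (-α) * Real.exp (-(μ * r))))
        + ∫ r in δ..R, K * (r ^ (-α) * Real.exp (-(μ * r))) :=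
    (intervalIntegral.integral_add_adjacent_intervals (hint1 0 δ) (hint1 δ R)).symm
  have hrint : ∀ a c : ℝ, 0 ≤ a → (∫ r in a..c, (r:ℝ) ^ (-α)) = (c ^ b - a ^ b) / b := by
    intro a c ha
    rw [integral_rpow (Or.inl (by linarith))]
    norm_num [hb]
    ring_nf
  have h1 : (∫ r in (0:ℝ)..δ, K * (r ^ (-α) * Real.exp (-(μ * r)))) ≤ ε / 2 := by
    have hle : (∫ r in (0:ℝ)..δ, K * (r ^ (-α) * Real.exp (-(μ * r))))
        ≤ ∫ r in (0:ℝ)..δ, K * r ^ (-α) := by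
      apply intervalIntegral.integral_mono_on hδpos.le (hint1 0 δ) (hint2 0 δ K)
      intro x hx
      have hx0 : 0 ≤ x := hx.1
      have he1 : Real.exp (-(μ * x)) ≤ 1 :=
        Real.exp_le_one_iff.mpr (neg_nonpos.mpr (mul_nonneg hμ0 hx0))
      have hr0 : 0 ≤ x ^ (-α) := Real.rpow_nonneg hx0 (-α)
      have := mul_le_of_le_one_right hr0 he1
      exact mul_le_mul_of_nonneg_left this hK.le
    calc _ ≤ ∫ r in (0:ℝ)..δ, K * r ^ (-α) := hle
      _ = K * ((δ ^ b - 0 ^ b) / b) := by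
          rw [intervalIntegral.integral_const_mul, hrint 0 δ le_rfl]
      _ = K * δ ^ b / b := by rw [Real.zero_rpow hbpos.ne']; ring
      _ ≤ ε / 2 := hδb
  have hexpδ : Real.exp (-(μ * δ)) ≤ 1 / Q := by
    have h0 : δ⁻¹ * Real.log (Q + 1) * δ = Real.log (Q + 1) := by field_simp
    have h1 : Real.log (Q + 1) ≤ μ * δ := by
      have := mul_le_mul_of_nonneg_right hμ hδpos.le
      rw [h0] at this; linarith
    have h2 : Real.exp (-(μ * δ)) ≤ Real.exp (-(Real.log (Q + 1))) :=
      Real.exp_le_exp.mpr (by linarith)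
    have h3 : Real.exp (-(Real.log (Q + 1))) = (Q + 1)⁻¹ := by
      rw [Real.exp_neg, Real.exp_log (by linarith)]
    calc Real.exp (-(μ * δ)) ≤ (Q + 1)⁻¹ := h2.trans_eq h3
      _ ≤ 1 / Q := by
          rw [inv_eq_one_div]
          exact one_div_le_one_div_of_le hQpos (by linarith)
  have h2 : (∫ r in δ..R, K * (r ^ (-α) * Real.exp (-(μ * r)))) ≤ ε / 2 := by
    have hle : (∫ r in δ..R, K * (r ^ (-α) * Real.exp (-(μ * r))))
        ≤ ∫ r in δ..R, (K * Real.exp (-(μ * δ))) * r ^ (-α) := by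
      apply intervalIntegral.integral_mono_on hδR (hint1 δ R) (hint2 δ R _)
      intro x hx
      have hx0 : 0 < x := lt_of_lt_of_le hδpos hx.1
      have hexp : Real.exp (-(μ * x)) ≤ Real.exp (-(μ * δ)) :=
        Real.exp_le_exp.mpr (by nlinarith [hx.1])
      have := mul_le_mul_of_nonneg_left hexp (Real.rpow_nonneg hx0.le (-α))
      calc K * (x ^ (-α) * Real.exp (-(μ * x)))
          ≤ K * (x ^ (-α) * Real.exp (-(μ * δ))) := mul_le_mul_of_nonneg_left this hK.le
        _ = (K * Real.exp (-(μ * δ))) * x ^ (-α) := by ring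
    have heq : (∫ r in δ..R, (K * Real.exp (-(μ * δ))) * r ^ (-α))
        = (K * Real.exp (-(μ * δ))) * ((R ^ b - δ ^ b) / b) := by
      rw [intervalIntegral.integral_const_mul, hrint δ R hδpos.le]
    have hmono : δ ^ b ≤ R ^ b := Real.rpow_le_rpow hδpos.le hδR hbpos.le
    have hQe : K * (1 / Q) * (R ^ b / b) = ε / 2 := by
      rw [hQ]; field_simp
    have hfin : (K * Real.exp (-(μ * δ))) * ((R ^ b - δ ^ b) / b) ≤ ε / 2 := by
      calc (K * Real.exp (-(μ * δ))) * ((R ^ b - δ ^ b) / b)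
          ≤ (K * (1 / Q)) * (R ^ b / b) := by
            apply mul_le_mul (mul_le_mul_of_nonneg_left hexpδ hK.le)
            · exact (div_le_div_iff_of_pos_right hbpos).mpr (by linarith [Real.rpow_nonneg hδpos.le b])
            · exact div_nonneg (by linarith) hbpos.le
            · exact mul_nonneg hK.le (le_of_lt (one_div_pos.mpr hQpos))
        _ = ε / 2 := hQe
    linarith [hle.trans (heq.le.trans hfin)]
  rw [hsplit]; linarith

lemma DP.sup_small {b R : ℝ} (hb : 0 < b) (hR : 0 < R) (ε : ℝ) (hε : 0 < ε) :
    ∃ lam : ℝ, 0 ≤ lam ∧ ∀ μ ≥ lam, ∀ t ∈ Set.Ioc (0:ℝ) R,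
      t ^ b * Real.exp (-(μ * t / 2)) ≤ ε := by
  set δ : ℝ := min R (ε ^ (1 / b)) with hδ
  have hδpos : 0 < δ := lt_min hR (Real.rpow_pos_of_pos hε _)
  have hδR : δ ≤ R := min_le_left _ _
  have hRb : 0 < R ^ b := Real.rpow_pos_of_pos hR b
  set Q : ℝ := R ^ b / ε with hQ
  have hQpos : 0 < Q := div_pos hRb hε
  have hlam0 : 0 ≤ (2 / δ) * Real.log (Q + 1) :=
    mul_nonneg (by positivity) (Real.log_nonneg (by linarith))
  refine ⟨(2 / δ) * Real.log (Q + 1), hlam0, fun μ hμ t ht => ?_⟩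
  have hμ0 : 0 ≤ μ := le_trans hlam0 hμ
  have ht0 : 0 < t := ht.1
  rcases le_or_gt t δ with h | h
  · have h1 : t ^ b ≤ δ ^ b := Real.rpow_le_rpow ht0.le h hb.le
    have h2 : δ ^ b ≤ ε := by
      calc δ ^ b ≤ (ε ^ (1 / b)) ^ b := Real.rpow_le_rpow hδpos.le (min_le_right _ _) hb.le
        _ = ε := rpow_one_div hε.le hb
    have h3 : Real.exp (-(μ * t / 2)) ≤ 1 :=
      Real.exp_le_one_iff.mpr (by nlinarith)
    nlinarith [Real.rpow_nonneg ht0.le b, Real.exp_pos (-(μ * t / 2))]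
  · have h1 : t ^ b ≤ R ^ b := Real.rpow_le_rpow ht0.le ht.2 hb.le
    have hlog : Real.log (Q + 1) ≤ μ * t / 2 := by
      have h2 : (2 / δ) * Real.log (Q + 1) * (δ / 2) = Real.log (Q + 1) := by
        field_simp
      have h3 := mul_le_mul_of_nonneg_right hμ (by positivity : (0:ℝ) ≤ δ / 2)
      rw [h2] at h3
      have h4 : μ * (δ / 2) ≤ μ * t / 2 := by nlinarith
      linarith
    have h5 : Real.exp (-(μ * t / 2)) ≤ (Q + 1)⁻¹ := by
      calc Real.exp (-(μ * t / 2)) ≤ Real.exp (-(Real.log (Q + 1))) :=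
            Real.exp_le_exp.mpr (by linarith)
        _ = (Q + 1)⁻¹ := by rw [Real.exp_neg, Real.exp_log (by linarith)]
    have h6 : (Q + 1)⁻¹ ≤ ε / R ^ b := by
      rw [inv_eq_one_div]
      have : 1 / (Q + 1) ≤ 1 / Q := one_div_le_one_div_of_le hQpos (by linarith)
      have hQε : 1 / Q = ε / R ^ b := by rw [hQ]; field_simp
      linarith [this.trans_eq hQε]
    have h7 : Real.exp (-(μ * t / 2)) ≤ ε / R ^ b := h5.trans h6
    calc t ^ b * Real.exp (-(μ * t / 2)) ≤ R ^ b * (ε / R ^ b) := by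
          apply mul_le_mul h1 h7 (Real.exp_pos _).le hRb.le
      _ = ε := by field_simp

lemma DP.conv_bound {K α R : ℝ} (hK : 0 < K) (hα : α < 1) (hR : 0 < R) :
    ∃ lam : ℝ, 0 ≤ lam ∧ ∀ t ∈ Set.Ioc (0:ℝ) R,
      (∫ s in (0:ℝ)..t, K * ((t - s) ^ (-α) * (Real.exp (lam * s) * s ^ (-(max α 0))))) ≤
        1 / 2 * (Real.exp (lam * t) * t ^ (-(max α 0))) := by
  set α' : ℝ := max α 0 with hα'
  have hα'0 : 0 ≤ α' := le_max_right _ _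
  have hα'1 : α' < 1 := max_lt hα one_pos
  set b : ℝ := 1 - α with hbdef
  set b' : ℝ := 1 - α' with hb'def
  have hbpos : 0 < b := by simp [hbdef]; linarith
  have hb'pos : 0 < b' := by simp [hb'def]; linarith
  set Cα : ℝ := (2:ℝ) ^ |α| with hCαdef
  have hCαpos : 0 < Cα := Real.rpow_pos_of_pos two_pos _
  have hCα1 : 1 ≤ Cα := by
    calc (1:ℝ) = (2:ℝ) ^ (0:ℝ) := (Real.rpow_zero 2).symm
      _ ≤ (2:ℝ) ^ |α| := Real.rpow_le_rpow_of_exponent_le one_le_two (abs_nonneg α)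
  have h2α'pos : 0 < (2:ℝ) ^ α' := Real.rpow_pos_of_pos two_pos _
  set ε₁ : ℝ := b' / (4 * K * Cα) with hε₁def
  set ε₂ : ℝ := 1 / (4 * (2:ℝ) ^ α') with hε₂def
  have hε₁pos : 0 < ε₁ := div_pos hb'pos (by positivity)
  have hε₂pos : 0 < ε₂ := by positivity
  obtain ⟨l₁, hl₁0, hsup⟩ := DP.sup_small hbpos hR ε₁ hε₁pos
  obtain ⟨l₂, hl₂0, heta⟩ := DP.eta_small hK hα hR ε₂ hε₂pos
  set lam : ℝ := max l₁ l₂ with hlamdef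
  have hlam0 : 0 ≤ lam := le_trans hl₁0 (le_max_left _ _)
  have hsup' := hsup lam (le_max_left _ _)
  have heta' := heta lam (le_max_right _ _)
  refine ⟨lam, hlam0, fun t ht => ?_⟩
  have ht0 : 0 < t := ht.1
  have htR : t ≤ R := ht.2
  have ht2 : 0 < t / 2 := half_pos ht0
  -- the pointwise bound on (t-x)^(-α)
  have hCab : ∀ x : ℝ, t / 2 ≤ x → x ≤ t → x ^ (-α) ≤ Cα * t ^ (-α) := by
    intro x hx1 hx2
    rcases le_or_gt 0 α with hc | hc
    · have h1 : x ^ (-α) ≤ (t / 2) ^ (-α) :=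
        Real.rpow_le_rpow_of_nonpos ht2 hx1 (neg_nonpos.mpr hc)
      have h2 : (t / 2) ^ (-α) = Cα * t ^ (-α) := by
        rw [Real.div_rpow ht0.le two_pos.le, hCαdef, abs_of_nonneg hc,
          div_eq_iff (by positivity)]
        rw [mul_comm ((2:ℝ) ^ α) (t ^ (-α)), mul_assoc, ← Real.rpow_add two_pos]
        simp
      linarith [h1.trans_eq h2]
    · have h1 : x ^ (-α) ≤ t ^ (-α) :=
        Real.rpow_le_rpow (le_trans ht2.le hx1) hx2 (by linarith)
      nlinarith [Real.rpow_nonneg ht0.le (-α)]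
  -- integrand and integrability
  set f : ℝ → ℝ := fun s => K * ((t - s) ^ (-α) * (Real.exp (lam * s) * s ^ (-α'))) with hfdef
  have hfint : IntervalIntegrable f volume 0 t := (DP.integ_aux hα hα'1 ht0).const_mul K
  have hsub1 : Set.uIcc 0 (t / 2) ⊆ Set.uIcc 0 t := by
    rw [Set.uIcc_of_le ht2.le, Set.uIcc_of_le ht0.le]
    exact Set.Icc_subset_Icc le_rfl (by linarith)
  have hsub2 : Set.uIcc (t / 2) t ⊆ Set.uIcc 0 t := by
    rw [Set.uIcc_of_le (by linarith), Set.uIcc_of_le ht0.le]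
    exact Set.Icc_subset_Icc (by linarith) le_rfl
  have hf1 : IntervalIntegrable f volume 0 (t / 2) := hfint.mono_set hsub1
  have hf2 : IntervalIntegrable f volume (t / 2) t := hfint.mono_set hsub2
  have hadd : (∫ s in (0:ℝ)..t, f s)
      = (∫ s in (0:ℝ)..(t / 2), f s) + ∫ s in (t / 2)..t, f s :=
    (intervalIntegral.integral_add_adjacent_intervals hf1 hf2).symm
  -- PIECE 1
  set C1 : ℝ := K * (Cα * t ^ (-α) * Real.exp (lam * (t / 2))) with hC1def
  have hC1pos : 0 < C1 := by
    apply mul_pos hK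
    exact mul_pos (mul_pos hCαpos (Real.rpow_pos_of_pos ht0 _)) (Real.exp_pos _)
  have hg1int : IntervalIntegrable (fun s : ℝ => C1 * s ^ (-α')) volume 0 (t / 2) := by
    have : (fun s : ℝ => C1 * s ^ (-α')) = fun s : ℝ => (s ^ (-α')) * C1 := by funext s; ring
    rw [this]
    exact (intervalIntegral.intervalIntegrable_rpow' (by linarith)).mul_continuousOn (by fun_prop)
  have hle1 : (∫ s in (0:ℝ)..(t / 2), f s) ≤ ∫ s in (0:ℝ)..(t / 2), C1 * s ^ (-α') := by
    apply intervalIntegral.integral_mono_on ht2.le hf1 hg1int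
    intro x hx
    have hxa : 0 ≤ x ^ (-α') := Real.rpow_nonneg hx.1 _
    have h1 : (t - x) ^ (-α) ≤ Cα * t ^ (-α) := hCab (t - x) (by linarith [hx.2]) (by linarith [hx.1])
    have h2 : Real.exp (lam * x) ≤ Real.exp (lam * (t / 2)) :=
      Real.exp_le_exp.mpr (mul_le_mul_of_nonneg_left hx.2 hlam0)
    have h3 : Real.exp (lam * x) * x ^ (-α') ≤ Real.exp (lam * (t / 2)) * x ^ (-α') :=
      mul_le_mul_of_nonneg_right h2 hxa
    have h4 : (t - x) ^ (-α) * (Real.exp (lam * x) * x ^ (-α'))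
        ≤ (Cα * t ^ (-α)) * (Real.exp (lam * (t / 2)) * x ^ (-α')) :=
      mul_le_mul h1 h3 (mul_nonneg (Real.exp_pos _).le hxa)
        (mul_nonneg hCαpos.le (Real.rpow_nonneg ht0.le _))
    calc f x ≤ K * ((Cα * t ^ (-α)) * (Real.exp (lam * (t / 2)) * x ^ (-α'))) :=
          mul_le_mul_of_nonneg_left h4 hK.le
      _ = C1 * x ^ (-α') := by rw [hC1def]; ring
  have hval1 : (∫ s in (0:ℝ)..(t / 2), C1 * s ^ (-α')) = C1 * ((t / 2) ^ b' / b') := by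
    rw [intervalIntegral.integral_const_mul, integral_rpow (Or.inl (by linarith))]
    rw [Real.zero_rpow (by simp [hb'def]; linarith : -α' + 1 ≠ 0)]
    congr 1
    rw [hb'def]
    ring_nf
  have hbound1 : C1 * ((t / 2) ^ b' / b') ≤ 1 / 4 * (Real.exp (lam * t) * t ^ (-α')) := by
    have hh1 : (t / 2) ^ b' ≤ t ^ b' := Real.rpow_le_rpow ht2.le (by linarith) hb'pos.le
    have htt : t ^ (-α) * t ^ b' = t ^ b * t ^ (-α') := by
      rw [← Real.rpow_add ht0, ← Real.rpow_add ht0]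
      congr 1
      rw [hbdef, hb'def]; ring
    have hexps : Real.exp (lam * (t / 2)) = Real.exp (lam * t) * Real.exp (-(lam * t / 2)) := by
      rw [← Real.exp_add]; congr 1; ring
    have hss := hsup' t ⟨ht0, htR⟩
    calc C1 * ((t / 2) ^ b' / b') ≤ C1 * (t ^ b' / b') := by
          apply mul_le_mul_of_nonneg_left _ hC1pos.le
          exact div_le_div_of_nonneg_right hh1 hb'pos.le
      _ = (K * Cα / b') * (t ^ b * Real.exp (-(lam * t / 2)))
            * (Real.exp (lam * t) * t ^ (-α')) := by
          rw [hC1def, hexps]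
          linear_combination (Real.exp (lam * t) * Real.exp (-(lam * t / 2)) * K * Cα / b') * htt
      _ ≤ (K * Cα / b') * ε₁ * (Real.exp (lam * t) * t ^ (-α')) := by
          apply mul_le_mul_of_nonneg_right (mul_le_mul_of_nonneg_left hss (by positivity))
          exact mul_nonneg (Real.exp_pos _).le (Real.rpow_nonneg ht0.le _)
      _ = 1 / 4 * (Real.exp (lam * t) * t ^ (-α')) := by
          congr 1
          rw [hε₁def]
          field_simp
  -- PIECE 2
  set F : ℝ → ℝ := fun r => K * (r ^ (-α) * Real.exp (-(lam * r))) with hFdef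
  have hFint : ∀ a c : ℝ, IntervalIntegrable F volume a c := by
    intro a c
    have : F = fun r : ℝ => (r ^ (-α)) * (K * Real.exp (-(lam * r))) := by
      funext r; rw [hFdef]; ring
    rw [this]
    exact (intervalIntegral.intervalIntegrable_rpow' (by linarith)).mul_continuousOn (by fun_prop)
  set C2 : ℝ := Real.exp (lam * t) * ((2:ℝ) ^ α' * t ^ (-α')) with hC2def
  have hC2pos : 0 < C2 :=
    mul_pos (Real.exp_pos _) (mul_pos h2α'pos (Real.rpow_pos_of_pos ht0 _))
  have hg2int : IntervalIntegrable (fun s : ℝ => C2 * F (t - s)) volume (t / 2) t := by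
    have h0 : IntervalIntegrable (fun s : ℝ => F (t - s)) volume (t / 2) t := by
      have := ((hFint 0 (t / 2)).comp_sub_left t).symm
      simpa [sub_half] using this
    exact h0.const_mul C2
  have hhalfeq : (t / 2) ^ (-α') = (2:ℝ) ^ α' * t ^ (-α') := by
    rw [Real.div_rpow ht0.le two_pos.le, div_eq_iff (by positivity)]
    rw [mul_comm ((2:ℝ) ^ α') (t ^ (-α')), mul_assoc, ← Real.rpow_add two_pos]
    simp
  have hle2 : (∫ s in (t / 2)..t, f s) ≤ ∫ s in (t / 2)..t, C2 * F (t - s) := by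
    apply intervalIntegral.integral_mono_on (by linarith) hf2 hg2int
    intro x hx
    have hx0 : 0 < x := lt_of_lt_of_le ht2 hx.1
    have hs : x ^ (-α') ≤ (2:ℝ) ^ α' * t ^ (-α') := by
      have := Real.rpow_le_rpow_of_nonpos ht2 hx.1 (neg_nonpos.mpr hα'0)
      linarith [this.trans_eq hhalfeq]
    have hexp : Real.exp (lam * x) = Real.exp (lam * t) * Real.exp (-(lam * (t - x))) := by
      rw [← Real.exp_add]; congr 1; ring
    have htx : 0 ≤ (t - x) ^ (-α) := Real.rpow_nonneg (by linarith [hx.2]) _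
    have h5 : Real.exp (lam * x) * x ^ (-α')
        ≤ Real.exp (lam * x) * ((2:ℝ) ^ α' * t ^ (-α')) :=
      mul_le_mul_of_nonneg_left hs (Real.exp_pos _).le
    calc f x ≤ K * ((t - x) ^ (-α) * (Real.exp (lam * x) * ((2:ℝ) ^ α' * t ^ (-α')))) := by
          apply mul_le_mul_of_nonneg_left (mul_le_mul_of_nonneg_left h5 htx) hK.le
      _ = C2 * F (t - x) := by rw [hC2def, hFdef, hexp]; ring
  have hval2 : (∫ s in (t / 2)..t, C2 * F (t - s)) = C2 * ∫ r in (0:ℝ)..(t / 2), F r := by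
    rw [intervalIntegral.integral_const_mul]
    congr 1
    have := intervalIntegral.integral_comp_sub_left F t (a := t / 2) (b := t)
    simpa [sub_half] using this
  have hval2b : (∫ r in (0:ℝ)..(t / 2), F r) ≤ ∫ r in (0:ℝ)..R, F r := by
    apply intervalIntegral.integral_mono_interval le_rfl ht2.le (by linarith)
    · apply (ae_restrict_iff' measurableSet_Ioc).2
      apply Filter.Eventually.of_forall
      intro r hr
      exact mul_nonneg hK.le (mul_nonneg (Real.rpow_nonneg hr.1.le _) (Real.exp_pos _).le)
    · exact hFint 0 R
  have hbound2 : (∫ s in (t / 2)..t, C2 * F (t - s))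
      ≤ 1 / 4 * (Real.exp (lam * t) * t ^ (-α')) := by
    rw [hval2]
    calc C2 * ∫ r in (0:ℝ)..(t / 2), F r ≤ C2 * ε₂ :=
          mul_le_mul_of_nonneg_left (hval2b.trans heta') hC2pos.le
      _ = 1 / 4 * (Real.exp (lam * t) * t ^ (-α')) := by
          rw [hC2def, hε₂def]
          field_simp
  calc (∫ s in (0:ℝ)..t, f s) = (∫ s in (0:ℝ)..(t / 2), f s) + ∫ s in (t / 2)..t, f s := hadd
    _ ≤ 1 / 4 * (Real.exp (lam * t) * t ^ (-α')) + 1 / 4 * (Real.exp (lam * t) * t ^ (-α')) := by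
        have := hle1.trans (hval1.le.trans hbound1)
        have := hle2.trans hbound2
        linarith
    _ = 1 / 2 * (Real.exp (lam * t) * t ^ (-α')) := by ring

lemma DP.master (T S : ℝ → X →L[ℝ] X) (u : X) {α lam K MT A R : ℝ}
    (hα : α < 1) (hK : 0 < K) (hR : 0 < R) (hlam : 0 ≤ lam) (hMT : 0 ≤ MT) (hA : 0 ≤ A)
    (hT : ∀ t ∈ Set.Ioc (0:ℝ) R, ‖T t‖ ≤ MT)
    (hS : ∀ t ∈ Set.Ioc (0:ℝ) R, ‖S t‖ ≤ K * t ^ (-α))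
    (hbase : ∀ t ∈ Set.Ioc (0:ℝ) R,
      K * t ^ (-α) ≤ A * (Real.exp (lam * t) * t ^ (-(max α 0))))
    (hconv : ∀ t ∈ Set.Ioc (0:ℝ) R,
      (∫ s in (0:ℝ)..t, K * ((t - s) ^ (-α) * (Real.exp (lam * s) * s ^ (-(max α 0))))) ≤
        1 / 2 * (Real.exp (lam * t) * t ^ (-(max α 0)))) :
    ∃ D : ℝ, ∀ t ∈ Set.Ioc (0:ℝ) R, ∀ k, ‖Per T S u k t‖ ≤ D * (1/2) ^ k := by
  set α' : ℝ := max α 0 with hα'def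
  have hα'0 : 0 ≤ α' := le_max_right _ _
  have hα'1 : α' < 1 := max_lt hα one_pos
  set b' : ℝ := 1 - α' with hb'def
  have hb'pos : 0 < b' := by simp [hb'def]; linarith
  have hne : ∀ᵐ s : ℝ ∂volume, s ≠ R * 0 := by simp [ae_iff, measure_singleton]
  -- BPer bound by induction
  have hbper : ∀ k, ∀ t ∈ Set.Ioc (0:ℝ) R,
      ‖BPer S u k t‖ ≤ A * (1/2) ^ k * (Real.exp (lam * t) * t ^ (-α')) * ‖u‖ := by
    intro k
    induction k with
    | zero =>
      intro t ht
      calc ‖BPer S u 0 t‖ = ‖S t u‖ := rfl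
        _ ≤ ‖S t‖ * ‖u‖ := (S t).le_opNorm u
        _ ≤ (K * t ^ (-α)) * ‖u‖ := mul_le_mul_of_nonneg_right (hS t ht) (norm_nonneg u)
        _ ≤ (A * (Real.exp (lam * t) * t ^ (-α'))) * ‖u‖ :=
            mul_le_mul_of_nonneg_right (hbase t ht) (norm_nonneg u)
        _ = A * (1/2) ^ 0 * (Real.exp (lam * t) * t ^ (-α')) * ‖u‖ := by
            rw [pow_zero]; ring
    | succ k ih =>
      intro t ht
      have ht0 : 0 < t := ht.1
      set C : ℝ := A * (1/2) ^ k * ‖u‖ with hCdef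
      have hC0 : 0 ≤ C := by
        apply mul_nonneg (mul_nonneg hA (by positivity)) (norm_nonneg u)
      set g : ℝ → ℝ := fun s =>
        C * (K * ((t - s) ^ (-α) * (Real.exp (lam * s) * s ^ (-α')))) with hgdef
      have hgint : IntervalIntegrable g volume 0 t :=
        ((DP.integ_aux hα hα'1 ht0).const_mul K).const_mul C
      have hne' : ∀ᵐ s : ℝ ∂volume, s ≠ t := by simp [ae_iff, measure_singleton]
      have hae : ∀ᵐ s ∂(volume.restrict (Set.uIoc 0 t)),
          ‖S (t - s) (BPer S u k s)‖ ≤ g s := by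
        filter_upwards [ae_restrict_mem measurableSet_uIoc, ae_restrict_of_ae hne']
          with s hsmem hsne
        rw [Set.uIoc_of_le ht0.le] at hsmem
        have hs0 : 0 < s := hsmem.1
        have hst : s < t := lt_of_le_of_ne hsmem.2 hsne
        have h1 : ‖S (t - s) (BPer S u k s)‖ ≤ ‖S (t - s)‖ * ‖BPer S u k s‖ :=
          (S (t - s)).le_opNorm _
        have h2 : ‖S (t - s)‖ ≤ K * (t - s) ^ (-α) :=
          hS (t - s) ⟨by linarith, by linarith [ht.2]⟩
        have h3 := ih s ⟨hs0, le_trans hst.le ht.2⟩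
        have h4 : ‖S (t - s)‖ * ‖BPer S u k s‖
            ≤ (K * (t - s) ^ (-α)) * (A * (1/2) ^ k * (Real.exp (lam * s) * s ^ (-α')) * ‖u‖) := by
          apply mul_le_mul h2 h3 (norm_nonneg _)
          have := Real.rpow_nonneg (by linarith : (0:ℝ) ≤ t - s) (-α)
          nlinarith
        calc ‖S (t - s) (BPer S u k s)‖ ≤ _ := h1
          _ ≤ _ := h4
          _ = g s := by rw [hgdef, hCdef]; ring
      have hnorm := intervalIntegral.norm_integral_le_abs_of_norm_le hae hgint
      have hgnn : 0 ≤ ∫ s in (0:ℝ)..t, g s := by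
        apply intervalIntegral.integral_nonneg ht0.le
        intro s hs
        have h5 : 0 ≤ (t - s) ^ (-α) := Real.rpow_nonneg (by linarith [hs.2]) _
        have h6 : 0 ≤ s ^ (-α') := Real.rpow_nonneg hs.1 _
        apply mul_nonneg hC0
        apply mul_nonneg hK.le
        exact mul_nonneg h5 (mul_nonneg (Real.exp_pos _).le h6)
      have hval : (∫ s in (0:ℝ)..t, g s)
          = C * ∫ s in (0:ℝ)..t, K * ((t - s) ^ (-α) * (Real.exp (lam * s) * s ^ (-α'))) := by
        rw [hgdef, intervalIntegral.integral_const_mul]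
      calc ‖BPer S u (k+1) t‖ = ‖∫ s in (0:ℝ)..t, S (t - s) (BPer S u k s)‖ := rfl
        _ ≤ |∫ s in (0:ℝ)..t, g s| := hnorm
        _ = ∫ s in (0:ℝ)..t, g s := abs_of_nonneg hgnn
        _ = C * ∫ s in (0:ℝ)..t, K * ((t - s) ^ (-α) * (Real.exp (lam * s) * s ^ (-α'))) := hval
        _ ≤ C * (1 / 2 * (Real.exp (lam * t) * t ^ (-α'))) :=
            mul_le_mul_of_nonneg_left (hconv t ht) hC0
        _ = A * (1/2) ^ (k+1) * (Real.exp (lam * t) * t ^ (-α')) * ‖u‖ := by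
            rw [hCdef, pow_succ]; ring
  -- Per bound
  set D : ℝ := max (MT * ‖u‖) (2 * (MT * A * ‖u‖ * Real.exp (lam * R) * (R ^ b' / b'))) with hDdef
  refine ⟨D, fun t ht k => ?_⟩
  have ht0 : 0 < t := ht.1
  match k with
  | 0 =>
    calc ‖Per T S u 0 t‖ = ‖T t u‖ := rfl
      _ ≤ ‖T t‖ * ‖u‖ := (T t).le_opNorm u
      _ ≤ MT * ‖u‖ := mul_le_mul_of_nonneg_right (hT t ht) (norm_nonneg u)
      _ ≤ D := le_max_left _ _
      _ = D * (1/2) ^ 0 := by rw [pow_zero, mul_one]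
  | (k+1) =>
    set C : ℝ := MT * A * (1/2) ^ k * ‖u‖ * Real.exp (lam * R) with hCdef
    have hC0 : 0 ≤ C := by
      apply mul_nonneg _ (Real.exp_pos _).le
      apply mul_nonneg (mul_nonneg (mul_nonneg hMT hA) (by positivity)) (norm_nonneg u)
    set h : ℝ → ℝ := fun s => C * s ^ (-α') with hhdef
    have hhint : IntervalIntegrable h volume 0 t := by
      have : h = fun s : ℝ => (s ^ (-α')) * C := by funext s; rw [hhdef]; ring
      rw [this]
      exact (intervalIntegral.intervalIntegrable_rpow' (by linarith)).mul_continuousOn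
        (by fun_prop)
    have hne' : ∀ᵐ s : ℝ ∂volume, s ≠ t := by simp [ae_iff, measure_singleton]
    have hae : ∀ᵐ s ∂(volume.restrict (Set.uIoc 0 t)),
        ‖T (t - s) (BPer S u k s)‖ ≤ h s := by
      filter_upwards [ae_restrict_mem measurableSet_uIoc, ae_restrict_of_ae hne']
        with s hsmem hsne
      rw [Set.uIoc_of_le ht0.le] at hsmem
      have hs0 : 0 < s := hsmem.1
      have hst : s < t := lt_of_le_of_ne hsmem.2 hsne
      have h1 : ‖T (t - s) (BPer S u k s)‖ ≤ ‖T (t - s)‖ * ‖BPer S u k s‖ :=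
        (T (t - s)).le_opNorm _
      have h2 : ‖T (t - s)‖ ≤ MT := hT (t - s) ⟨by linarith, by linarith [ht.2]⟩
      have h3 := hbper k s ⟨hs0, le_trans hst.le ht.2⟩
      have hexp : Real.exp (lam * s) ≤ Real.exp (lam * R) := by
        apply Real.exp_le_exp.mpr
        apply mul_le_mul_of_nonneg_left _ hlam
        linarith [ht.2]
      have hsa : 0 ≤ s ^ (-α') := Real.rpow_nonneg hs0.le _
      have h4 : ‖T (t - s)‖ * ‖BPer S u k s‖
          ≤ MT * (A * (1/2) ^ k * (Real.exp (lam * s) * s ^ (-α')) * ‖u‖) := by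
        apply mul_le_mul h2 h3 (norm_nonneg _) hMT
      have h5 : MT * (A * (1/2) ^ k * (Real.exp (lam * s) * s ^ (-α')) * ‖u‖) ≤ h s := by
        rw [hhdef, hCdef]
        have hAk : (0:ℝ) ≤ MT * (A * (1/2) ^ k * ‖u‖) := by
          apply mul_nonneg hMT
          apply mul_nonneg (mul_nonneg hA (by positivity)) (norm_nonneg u)
        nlinarith [mul_le_mul_of_nonneg_right hexp hsa,
          mul_le_mul_of_nonneg_left (mul_le_mul_of_nonneg_right hexp hsa) hAk]
      exact h1.trans (h4.trans h5)
    have hnorm := intervalIntegral.norm_integral_le_abs_of_norm_le hae hhint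
    have hhnn : 0 ≤ ∫ s in (0:ℝ)..t, h s := by
      apply intervalIntegral.integral_nonneg ht0.le
      intro s hs
      exact mul_nonneg hC0 (Real.rpow_nonneg hs.1 _)
    have hval : (∫ s in (0:ℝ)..t, h s) = C * (t ^ b' / b') := by
      rw [hhdef, intervalIntegral.integral_const_mul, integral_rpow (Or.inl (by linarith))]
      rw [Real.zero_rpow (by simp [hb'def]; linarith : -α' + 1 ≠ 0)]
      congr 1
      rw [hb'def]
      ring_nf
    have hmono : t ^ b' ≤ R ^ b' := Real.rpow_le_rpow ht0.le ht.2 hb'pos.le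
    have hfin : C * (t ^ b' / b') ≤ D * (1/2) ^ (k+1) := by
      have h6 : C * (t ^ b' / b') ≤ C * (R ^ b' / b') :=
        mul_le_mul_of_nonneg_left (div_le_div_of_nonneg_right hmono hb'pos.le) hC0
      have h7 : C * (R ^ b' / b')
          = (2 * (MT * A * ‖u‖ * Real.exp (lam * R) * (R ^ b' / b'))) * (1/2) ^ (k+1) := by
        rw [hCdef, pow_succ]; ring
      have h8 : (2 * (MT * A * ‖u‖ * Real.exp (lam * R) * (R ^ b' / b'))) * (1/2) ^ (k+1)
          ≤ D * (1/2) ^ (k+1) :=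
        mul_le_mul_of_nonneg_right (le_max_right _ _) (by positivity)
      linarith [h6.trans_eq h7]
    calc ‖Per T S u (k+1) t‖ = ‖∫ s in (0:ℝ)..t, T (t - s) (BPer S u k s)‖ := rfl
      _ ≤ |∫ s in (0:ℝ)..t, h s| := hnorm
      _ = ∫ s in (0:ℝ)..t, h s := abs_of_nonneg hhnn
      _ = C * (t ^ b' / b') := hval
      _ ≤ D * (1/2) ^ (k+1) := hfin

/-- under the Dyson–Phillips hypotheses (strongly continuous semigroup
`T t = e^{-tA}` with `‖T t‖ ≤ M e^{tω}`, perturbation `S t = B e^{-tA}` with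
`‖S t‖ ≤ c t^{-α}`, `α < 1`), the Dyson–Phillips series `∑_k Per^k(u)(t)` converges
absolutely for every `t > 0`, uniformly for `t` in each interval `(ε, 1/ε)`,
`0 < ε < 1`. -/
theorem stmt_16 (T S : ℝ → X →L[ℝ] X) (M ω c α : ℝ)
    (hM : 0 < M) (hω : 0 < ω) (hc : 0 < c) (hα : α < 1)
    (hTsg : ∀ t > (0:ℝ), ∀ s > (0:ℝ), T (t + s) = (T t).comp (T s))
    (hST : ∀ t > (0:ℝ), ∀ s > (0:ℝ), S (t + s) = (S t).comp (T s))
    (hTcont : ∀ u : X, ContinuousOn (fun t => T t u) (Set.Ioi 0))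
    (hScont : ∀ u : X, ContinuousOn (fun t => S t u) (Set.Ioi 0))
    (hT0 : ∀ u : X, Filter.Tendsto (fun t => T t u)
      (nhdsWithin 0 (Set.Ioi 0)) (nhds u))
    (hTb : ∀ t > (0:ℝ), ‖T t‖ ≤ M * Real.exp (t * ω))
    (hSb : ∀ t : ℝ, 0 < t → t ≤ 1 → ‖S t‖ ≤ c * t ^ (-α))
    (u : X) :
    (∀ t > (0:ℝ), Summable fun k => ‖Per T S u k t‖) ∧
    (∀ ε : ℝ, 0 < ε → ε < 1 →
      TendstoUniformlyOn (fun N t => ∑ k ∈ Finset.range N, Per T S u k t)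
        (fun t => ∑' k, Per T S u k t) Filter.atTop (Set.Ioo ε (1 / ε))) := by
  have key : ∀ R : ℝ, 0 < R →
      ∃ D : ℝ, ∀ t ∈ Set.Ioc (0:ℝ) R, ∀ k, ‖Per T S u k t‖ ≤ D * (1/2) ^ k := by
    intro R hR
    set MT : ℝ := M * Real.exp (R * ω) with hMTdef
    have hMT0 : 0 ≤ MT := by positivity
    have hT' : ∀ t ∈ Set.Ioc (0:ℝ) R, ‖T t‖ ≤ MT := by
      intro t ht
      refine (hTb t ht.1).trans ?_
      apply mul_le_mul_of_nonneg_left _ hM.le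
      exact Real.exp_le_exp.mpr (mul_le_mul_of_nonneg_right ht.2 hω.le)
    have hMe : 0 < M * Real.exp (R * ω) := by positivity
    have hRα : 0 < R ^ α := Real.rpow_pos_of_pos hR α
    set K : ℝ := c * (1 + M * Real.exp (R * ω)) * (1 + R ^ α) with hKdef
    have hK : 0 < K := by
      apply mul_pos (mul_pos hc (by linarith)) (by linarith)
    have hS' : ∀ t ∈ Set.Ioc (0:ℝ) R, ‖S t‖ ≤ K * t ^ (-α) := by
      intro t ht
      have hta : 0 ≤ t ^ (-α) := Real.rpow_nonneg ht.1.le _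
      rcases le_or_gt t 1 with h1 | h1
      · refine (hSb t ht.1 h1).trans ?_
        have hcK : c ≤ K := by
          rw [hKdef]
          nlinarith [mul_pos hc hMe, mul_pos hc hRα, mul_pos (mul_pos hc hMe) hRα]
        exact mul_le_mul_of_nonneg_right hcK hta
      · have h1t : (0:ℝ) < t - 1 := by linarith
        have heq : S t = (S 1).comp (T (t - 1)) := by
          have := hST 1 one_pos (t - 1) h1t
          rwa [show (1:ℝ) + (t - 1) = t by ring] at this
        have hS1 : ‖S 1‖ ≤ c := by
          have := hSb 1 one_pos le_rfl
          simpa [Real.one_rpow] using this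
        have hT1 : ‖T (t - 1)‖ ≤ M * Real.exp (R * ω) := by
          refine (hTb (t - 1) h1t).trans ?_
          apply mul_le_mul_of_nonneg_left _ hM.le
          apply Real.exp_le_exp.mpr
          apply mul_le_mul_of_nonneg_right _ hω.le
          linarith [ht.2]
        have hcomp : ‖S t‖ ≤ c * (M * Real.exp (R * ω)) := by
          rw [heq]
          calc ‖(S 1).comp (T (t - 1))‖ ≤ ‖S 1‖ * ‖T (t - 1)‖ := (S 1).opNorm_comp_le _
            _ ≤ c * (M * Real.exp (R * ω)) :=
                mul_le_mul hS1 hT1 (norm_nonneg _) hc.le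
        refine hcomp.trans ?_
        rcases le_or_gt 0 α with hα0 | hα0
        · have htα : R ^ (-α) ≤ t ^ (-α) :=
            Real.rpow_le_rpow_of_nonpos ht.1 ht.2 (neg_nonpos.mpr hα0)
          have hR0 : 0 < R ^ (-α) := Real.rpow_pos_of_pos hR _
          have hRR : R ^ α * R ^ (-α) = 1 := by
            rw [← Real.rpow_add hR]; simp
          have expand : K * R ^ (-α)
              = c * (1 + M * Real.exp (R * ω)) * (R ^ (-α) + 1) := by
            rw [hKdef]
            linear_combination (c * (1 + M * Real.exp (R * ω))) * hRR
          have hKR : c * (M * Real.exp (R * ω)) ≤ K * R ^ (-α) := by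
            rw [expand]
            nlinarith [mul_pos hc hR0, mul_pos (mul_pos hc hMe) hR0, hc.le]
          exact hKR.trans (mul_le_mul_of_nonneg_left htα hK.le)
        · have h1α : (1:ℝ) ≤ t ^ (-α) := by
            have := Real.rpow_le_rpow (by norm_num : (0:ℝ) ≤ 1) h1.le
              (by linarith : (0:ℝ) ≤ -α)
            simpa [Real.one_rpow] using this
          have hcK : c * (M * Real.exp (R * ω)) ≤ K := by
            rw [hKdef]
            nlinarith [mul_pos hc hMe, mul_pos hc hRα, mul_pos (mul_pos hc hMe) hRα]
          calc c * (M * Real.exp (R * ω)) ≤ K := hcK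
            _ = K * 1 := (mul_one K).symm
            _ ≤ K * t ^ (-α) := mul_le_mul_of_nonneg_left h1α hK.le
    obtain ⟨lam, hlam0, hconv⟩ := DP.conv_bound hK hα hR
    set A : ℝ := K * (1 + R ^ (-α)) with hAdef
    have hRnα : 0 < R ^ (-α) := Real.rpow_pos_of_pos hR _
    have hA0 : 0 ≤ A := by
      apply mul_nonneg hK.le; linarith
    have hbase : ∀ t ∈ Set.Ioc (0:ℝ) R,
        K * t ^ (-α) ≤ A * (Real.exp (lam * t) * t ^ (-(max α 0))) := by
      intro t ht
      have hE1 : 1 ≤ Real.exp (lam * t) := Real.one_le_exp (mul_nonneg hlam0 ht.1.le)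
      have htα' : 0 ≤ t ^ (-(max α 0)) := Real.rpow_nonneg ht.1.le _
      have hstep : K * t ^ (-α) ≤ A * t ^ (-(max α 0)) := by
        rcases le_or_gt 0 α with hα0 | hα0
        · rw [max_eq_left hα0]
          have hta : 0 ≤ t ^ (-α) := Real.rpow_nonneg ht.1.le _
          have : K ≤ A := by rw [hAdef]; nlinarith [mul_pos hK hRnα]
          exact mul_le_mul_of_nonneg_right this hta
        · rw [max_eq_right hα0.le]
          rw [neg_zero, Real.rpow_zero, mul_one]
          have htR : t ^ (-α) ≤ R ^ (-α) :=
            Real.rpow_le_rpow ht.1.le ht.2 (by linarith)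
          rw [hAdef]
          nlinarith [mul_nonneg hK.le (sub_nonneg.mpr htR), hK]
      calc K * t ^ (-α) ≤ A * t ^ (-(max α 0)) := hstep
        _ = A * (1 * t ^ (-(max α 0))) := by rw [one_mul]
        _ ≤ A * (Real.exp (lam * t) * t ^ (-(max α 0))) :=
            mul_le_mul_of_nonneg_left (mul_le_mul_of_nonneg_right hE1 htα') hA0
    exact DP.master T S u hα hK hR hlam0 hMT0 hA0 hT' hS' hbase hconv
  constructor
  · intro t ht
    obtain ⟨D, hD⟩ := key t ht
    apply Summable.of_nonneg_of_le (fun k => norm_nonneg _) (fun k => hD t ⟨ht, le_rfl⟩ k)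
    exact summable_geometric_two.mul_left D
  · intro ε hε0 hε1
    have hR : 0 < 1 / ε := by positivity
    obtain ⟨D, hD⟩ := key (1 / ε) hR
    exact tendstoUniformlyOn_tsum_nat (summable_geometric_two.mul_left D)
      (fun k x hx => hD x ⟨lt_trans hε0 hx.1, hx.2.le⟩ k)

end
end

section
/- Let g = k ⊕ p be a real reductive Lie algebra with Cartan decomposition and B^θ-orthonormal basis adapted to it, V a Hermitian g-module. On C^{p,0}(g;V) = V ⊗ Λ^p k*, the operator □_∘ (defined by (□_∘ η)_J = Σ_a τ(X_a) Σ_{j,u} (-1)^{u-1} C^a_{j j_u} η_{j∪J(u)}) equals Σ_{j ∈ I_g} τ(X_j) ∘ coadj*(X_j), and on C^{0,q}(g;V) = V ⊗ Λ^q p* it equals -Σ_{j ∈ I_g} τ(X_j) ∘ coadj*(X_j). -/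
open scoped InnerProductSpace

/-- for a real reductive Lie algebra `g = k ⊕ p` (Cartan involution
`θ`, invariant form `B`, inner product `B^θ(X,Y) = B(X,θY)`, adapted orthonormal
basis `b` indexed by `I ⊕ A` with `b (inl i) ∈ k`, `b (inr α) ∈ p`) and a Hermitian
`g`-module `(V,τ)`, the operator `□_∘`, in cochain coefficients
`(□_∘ η)_J = ∑_a τ(X_a) ∑_{j,u} (-1)^{u-1} C^a_{j j_u} η_{{j}∪J(u)}`, equals
`∑_x τ(X_x) ∘ coadj*(X_x)` on `C^{p,0}(g;V)` (cochains supported on `k`-indices)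
and `-∑_x τ(X_x) ∘ coadj*(X_x)` on `C^{0,q}(g;V)` (cochains supported on
`p`-indices), where the coadjoint* action on coefficients is
`(coadj*(X_x) η)_J = ∑_u ∑_j C^j_{J_u, x} η_{J with u-th index j}`. -/
theorem stmt_18 {g : Type*} [NormedAddCommGroup g] [InnerProductSpace ℝ g]
    [LieRing g] [LieAlgebra ℝ g]
    {V : Type*} [NormedAddCommGroup V] [InnerProductSpace ℂ V]
    {I A : Type*} [Fintype I] [Fintype A] [DecidableEq I] [DecidableEq A]
    (b : Module.Basis (I ⊕ A) ℝ g) (hb : Orthonormal ℝ b)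
    (θ : g →ₗ[ℝ] g) (hθ2 : ∀ X, θ (θ X) = X)
    (hθbr : ∀ X Y : g, θ ⁅X, Y⁆ = ⁅θ X, θ Y⁆)
    (hk : ∀ i : I, θ (b (Sum.inl i)) = b (Sum.inl i))
    (hp : ∀ α : A, θ (b (Sum.inr α)) = - b (Sum.inr α))
    (B : g →ₗ[ℝ] g →ₗ[ℝ] ℝ) (hBsymm : ∀ X Y : g, B X Y = B Y X)
    (hBinv : ∀ X Y Z : g, B ⁅X, Y⁆ Z = B X ⁅Y, Z⁆)
    (hBθ : ∀ X Y : g, ⟪X, Y⟫_ℝ = B X (θ Y))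
    (τ : g → V →ₗ[ℂ] V)
    (hmod : ∀ X Y : g, τ ⁅X, Y⁆ = τ X ∘ₗ τ Y - τ Y ∘ₗ τ X)
    (hskew : ∀ (X : g) (u v : V), ⟪τ X u, v⟫_ℂ + ⟪u, τ X v⟫_ℂ = 0)
    (p : ℕ)
    (C : (I ⊕ A) → (I ⊕ A) → (I ⊕ A) → ℝ)
    (hC : ∀ γ α β, C γ α β = b.repr ⁅b α, b β⁆ γ)
    (boxCirc : ((Fin (p + 1) → I ⊕ A) → V) → (Fin (p + 1) → I ⊕ A) → V)
    (hbox : ∀ η J, boxCirc η J = ∑ a : I ⊕ A, ∑ j : I ⊕ A, ∑ u : Fin (p + 1),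
      (((-1 : ℝ) ^ (u : ℕ) * C a j (J u) : ℝ) : ℂ) •
        τ (b a) (η (Fin.cons j (J ∘ u.succAbove))))
    (coadjStarAct : (I ⊕ A) → ((Fin (p + 1) → I ⊕ A) → V) → (Fin (p + 1) → I ⊕ A) → V)
    (hcs : ∀ x η J, coadjStarAct x η J = ∑ u : Fin (p + 1), ∑ j : I ⊕ A,
      ((C j (J u) x : ℝ) : ℂ) • η (Function.update J u j)) :
    (∀ η : (Fin (p + 1) → I ⊕ A) → V,
      (∀ (J) (σ : Equiv.Perm (Fin (p + 1))), η (J ∘ σ) = (Equiv.Perm.sign σ : ℤ) • η J) →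
      (∀ J : Fin (p + 1) → I ⊕ A, (∃ u, ∃ α : A, J u = Sum.inr α) → η J = 0) →
      ∀ J : Fin (p + 1) → I ⊕ A, (∀ u, ∃ i : I, J u = Sum.inl i) →
        boxCirc η J = ∑ x : I ⊕ A, τ (b x) (coadjStarAct x η J)) ∧
    (∀ η : (Fin (p + 1) → I ⊕ A) → V,
      (∀ (J) (σ : Equiv.Perm (Fin (p + 1))), η (J ∘ σ) = (Equiv.Perm.sign σ : ℤ) • η J) →
      (∀ J : Fin (p + 1) → I ⊕ A, (∃ u, ∃ i : I, J u = Sum.inl i) → η J = 0) →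
      ∀ J : Fin (p + 1) → I ⊕ A, (∀ u, ∃ α : A, J u = Sum.inr α) →
        boxCirc η J = - ∑ x : I ⊕ A, τ (b x) (coadjStarAct x η J)) := by
  classical
  -- coordinates via the inner product
  have hrepr : ∀ (X : g) (c : I ⊕ A), b.repr X c = ⟪b c, X⟫_ℝ := by
    intro X c
    rw [hBθ]
    conv_rhs => rw [← b.linearCombination_repr X]
    rw [Finsupp.linearCombination_apply, map_finsuppSum, map_finsuppSum]
    simp only [map_smul, smul_eq_mul, ← hBθ, orthonormal_iff_ite.mp hb]
    simp [Finsupp.sum_ite_eq]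
  -- signs of basis vectors under θ
  set eps : I ⊕ A → ℝ := Sum.elim (fun _ => (1 : ℝ)) (fun _ => (-1 : ℝ)) with heps
  -- basic symmetries of B
  have hB1 : ∀ X Y : g, B X (θ Y) = B Y (θ X) := by
    intro X Y
    rw [← hBθ, ← hBθ, real_inner_comm]
  have hcyc : ∀ X Y Z : g, B X ⁅Y, Z⁆ = B Z ⁅X, Y⁆ := by
    intro X Y Z
    rw [← hBinv, hBsymm]
  have hθout : ∀ X Y Z : g, B (θ X) ⁅Y, Z⁆ = B X ⁅θ Y, θ Z⁆ := by
    intro X Y Z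
    conv_lhs => rw [show ⁅Y, Z⁆ = θ (θ ⁅Y, Z⁆) from (hθ2 _).symm]
    rw [hB1, hθ2, hBsymm, hθbr]
  have hstep1 : ∀ (x : I ⊕ A) (W : g), B (θ (b x)) W = eps x * B (b x) W := by
    rintro (i | α) W
    · rw [hk]; simp [heps]
    · rw [hp, map_neg]; simp [heps]
  have hstep2 : ∀ x y z : I ⊕ A, B (θ (b x)) ⁅b y, b z⁆ =
      (eps y * eps z) * B (b x) ⁅b y, b z⁆ := by
    intro x y z
    rw [hθout, hcyc, hstep1, hcyc, hstep1, hcyc]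
    ring
  have heps1 : ∀ t : I ⊕ A, eps t = 1 ∨ eps t = -1 := by
    rintro (i | α) <;> simp [heps]
  have hvan : ∀ x y z : I ⊕ A, eps x * (eps y * eps z) = -1 → B (b x) ⁅b y, b z⁆ = 0 := by
    intro x y z hxyz
    have h3 : eps x * B (b x) ⁅b y, b z⁆ = (eps y * eps z) * B (b x) ⁅b y, b z⁆ := by
      rw [← hstep1, hstep2]
    rcases heps1 x with hx | hx <;> rcases heps1 y with hy | hy <;> rcases heps1 z with hz | hz <;>
        rw [hx, hy, hz] at h3 hxyz <;> norm_num at hxyz <;> norm_num at h3 ⊢ <;> linarith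
  -- structure constants via B
  have hCB2 : ∀ c x y, C c x y = eps c * B (b c) ⁅b x, b y⁆ := by
    intro c x y
    rw [hC, hrepr, real_inner_comm, hBθ]
    rcases c with i | α
    · rw [hk, hBsymm]; simp [heps]
    · rw [hp, map_neg, hBsymm]; simp [heps]
  -- key symmetries
  have key1 : ∀ (a : I ⊕ A) (j m : I),
      C a (Sum.inl j) (Sum.inl m) = C (Sum.inl j) (Sum.inl m) a := by
    rintro (i | α) j m
    · rw [hCB2, hCB2]
      have h1 := hcyc (b (Sum.inl i)) (b (Sum.inl j)) (b (Sum.inl m))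
      have h2 := hcyc (b (Sum.inl m)) (b (Sum.inl i)) (b (Sum.inl j))
      simp only [heps, Sum.elim_inl]
      linarith
    · rw [hCB2, hCB2, hvan _ _ _ (by simp [heps]), hvan _ _ _ (by simp [heps])]
      ring
  have key2 : ∀ (a : I ⊕ A) (j m : A),
      C a (Sum.inr j) (Sum.inr m) = - C (Sum.inr j) (Sum.inr m) a := by
    rintro (i | α) j m
    · rw [hCB2, hCB2]
      have h1 := hcyc (b (Sum.inl i)) (b (Sum.inr j)) (b (Sum.inr m))
      have h2 := hcyc (b (Sum.inr m)) (b (Sum.inl i)) (b (Sum.inr j))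
      simp only [heps, Sum.elim_inl, Sum.elim_inr]
      linarith
    · rw [hCB2, hCB2, hvan _ _ _ (by simp [heps]), hvan _ _ _ (by simp [heps])]
      ring
  -- moving the new index into place costs a sign (-1)^u
  have hswap : ∀ (η : (Fin (p + 1) → I ⊕ A) → V),
      (∀ (J) (σ : Equiv.Perm (Fin (p + 1))), η (J ∘ σ) = (Equiv.Perm.sign σ : ℤ) • η J) →
      ∀ (J : Fin (p + 1) → I ⊕ A) (u : Fin (p + 1)) (j : I ⊕ A),
      η (Fin.cons j (J ∘ u.succAbove)) = ((-1 : ℤ) ^ (u : ℕ)) • η (Function.update J u j) := by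
    intro η halt J u j
    have hfun : (Function.update J u j) ∘ ⇑(u.cycleRange.symm) =
        Fin.cons j (J ∘ u.succAbove) := by
      funext v
      refine Fin.cases ?_ ?_ v
      · show Function.update J u j (u.cycleRange.symm 0) = _
        rw [Fin.cycleRange_symm_zero, Function.update_self]
        simp
      · intro w
        show Function.update J u j (u.cycleRange.symm w.succ) = _
        rw [Fin.cycleRange_symm_succ, Function.update_of_ne (Fin.succAbove_ne u w)]
        simp
    rw [← hfun, halt (Function.update J u j) u.cycleRange.symm]
    congr 1
    rw [Equiv.Perm.sign_symm, Fin.sign_cycleRange]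
    simp
  -- box in terms of updates
  have hmainL : ∀ (η : (Fin (p + 1) → I ⊕ A) → V),
      (∀ (J) (σ : Equiv.Perm (Fin (p + 1))), η (J ∘ σ) = (Equiv.Perm.sign σ : ℤ) • η J) →
      ∀ J, boxCirc η J = ∑ a : I ⊕ A, ∑ j : I ⊕ A, ∑ u : Fin (p + 1),
        ((C a j (J u) : ℝ) : ℂ) • τ (b a) (η (Function.update J u j)) := by
    intro η halt J
    rw [hbox]
    refine Finset.sum_congr rfl fun a _ => Finset.sum_congr rfl fun j _ =>
      Finset.sum_congr rfl fun u _ => ?_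
    rw [hswap η halt J u j, map_zsmul, ← Int.cast_smul_eq_zsmul ℂ, smul_smul]
    congr 1
    push_cast
    have h1 : ((-1 : ℂ)) ^ (u : ℕ) * ((-1 : ℂ)) ^ (u : ℕ) = 1 := by
      rw [← mul_pow]; norm_num
    linear_combination ((C a j (J u) : ℂ)) * h1
  -- coadjoint term expanded
  have hmainR : ∀ (η : (Fin (p + 1) → I ⊕ A) → V) (x : I ⊕ A) (J),
      τ (b x) (coadjStarAct x η J) = ∑ u : Fin (p + 1), ∑ j : I ⊕ A,
        ((C j (J u) x : ℝ) : ℂ) • τ (b x) (η (Function.update J u j)) := by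
    intro η x J
    rw [hcs, map_sum]
    refine Finset.sum_congr rfl fun u _ => ?_
    rw [map_sum]
    exact Finset.sum_congr rfl fun j _ => map_smul _ _ _
  constructor
  · intro η halt hsupp J hJ
    rw [hmainL η halt J]
    refine Eq.trans ?_ (Finset.sum_congr rfl fun x _ => (hmainR η x J).symm)
    refine Finset.sum_congr rfl fun a _ => ?_
    rw [Finset.sum_comm]
    refine Finset.sum_congr rfl fun u _ => Finset.sum_congr rfl fun j _ => ?_
    rcases j with j | β
    · obtain ⟨m, hm⟩ := hJ u
      rw [hm, key1 a j m]
    · have h0 : η (Function.update J u (Sum.inr β)) = 0 :=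
        hsupp _ ⟨u, β, Function.update_self u (Sum.inr β) J⟩
      rw [h0]
      simp
  · intro η halt hsupp J hJ
    rw [hmainL η halt J, ← Finset.sum_neg_distrib]
    refine Finset.sum_congr rfl fun a _ => ?_
    rw [hmainR η a J, ← Finset.sum_neg_distrib, Finset.sum_comm]
    refine Finset.sum_congr rfl fun u _ => ?_
    rw [← Finset.sum_neg_distrib]
    refine Finset.sum_congr rfl fun j _ => ?_
    rcases j with j | m
    · have h0 : η (Function.update J u (Sum.inl j)) = 0 :=
        hsupp _ ⟨u, j, Function.update_self u (Sum.inl j) J⟩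
      rw [h0]
      simp
    · obtain ⟨m', hm⟩ := hJ u
      rw [hm, key2 a m m']
      push_cast
      rw [neg_smul]
end
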